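/- Let u : [0,h₁] × [0,h₂] → ℝ have continuous partials D_x^i D_y^j u for 0 ≤ i,j ≤ 3. Suppose u satisfies the homogeneous non-classical conditions at the left/bottom boundary: D_y^j u(0,0) = 0 for j = 0,1,2; D_y³ u(0,y) = 0 for all y; D_x D_y^j u(0,0) = 0 for j = 0,1,2; D_x D_y³ u(0,y) = 0 for all y; D_x² D_y^j u(0,0) = 0 for j = 0,1; D_x³ D_y^j u(x,0) = 0 for all x and j = 0,1. Then u(0,y) = 0 and D_x u(0,y) = 0 for all y ∈ [0,h₂], and u(x,0) = 0 and D_y u(x,0) = 0 for all x ∈ [0,h₁]. -/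

import Mathlib

open Set

section helpers

lemma zero_of_jet' {h : ℝ} (hh : 0 < h) {f : ℝ → ℝ} (hf : ContDiffOn ℝ 3 f (Set.Icc 0 h))
    (hj : ∀ j ≤ 2, iteratedDerivWithin j f (Set.Icc 0 h) 0 = 0)
    (htop : ∀ y ∈ Set.Icc (0:ℝ) h, iteratedDerivWithin 3 f (Set.Icc 0 h) y = 0) :
    ∀ y ∈ Set.Icc (0:ℝ) h, f y = 0 := by
  have ud : UniqueDiffOn ℝ (Set.Icc (0:ℝ) h) := uniqueDiffOn_Icc hh
  have key : ∀ n : ℕ, n < 3 →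
      (∀ y ∈ Set.Icc (0:ℝ) h, iteratedDerivWithin (n+1) f (Set.Icc 0 h) y = 0) →
      iteratedDerivWithin n f (Set.Icc 0 h) 0 = 0 →
      ∀ y ∈ Set.Icc (0:ℝ) h, iteratedDerivWithin n f (Set.Icc 0 h) y = 0 := by
    intro n hn hsucc h0 y hy
    have hdiff : DifferentiableOn ℝ (iteratedDerivWithin n f (Set.Icc 0 h)) (Set.Icc 0 h) :=
      hf.differentiableOn_iteratedDerivWithin (by exact_mod_cast hn) ud
    have hz : ∀ z ∈ Set.Ico (0:ℝ) h,
        derivWithin (iteratedDerivWithin n f (Set.Icc 0 h)) (Set.Icc 0 h) z = 0 := by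
      intro z hz
      rw [← iteratedDerivWithin_succ]
      exact hsucc z (Set.Ico_subset_Icc_self hz)
    exact (constant_of_derivWithin_zero hdiff hz y hy).trans h0
  have e2 := key 2 (by norm_num) htop (hj 2 le_rfl)
  have e1 := key 1 (by norm_num) e2 (hj 1 (by norm_num))
  have e0 := key 0 (by norm_num) e1 (hj 0 (by norm_num))
  intro y hy
  have := e0 y hy
  rwa [iteratedDerivWithin_zero] at this

open intervalIntegral MeasureTheory in
lemma FTC_iter' {h : ℝ} {f : ℝ → ℝ} (hh : 0 < h) (hf : ContDiffOn ℝ 3 f (Set.Icc 0 h))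
    {j : ℕ} (hj : j ≤ 2) {y : ℝ} (hy : y ∈ Set.Icc (0:ℝ) h) :
    iteratedDerivWithin j f (Set.Icc 0 h) y = iteratedDerivWithin j f (Set.Icc 0 h) 0 +
      ∫ t in (0:ℝ)..y, iteratedDerivWithin (j+1) f (Set.Icc 0 h) t := by
  have ud : UniqueDiffOn ℝ (Set.Icc (0:ℝ) h) := uniqueDiffOn_Icc hh
  have hsub : Set.Icc (0:ℝ) y ⊆ Set.Icc 0 h := Set.Icc_subset_Icc le_rfl hy.2
  have hcont : ContinuousOn (iteratedDerivWithin j f (Set.Icc 0 h)) (Set.Icc 0 y) :=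
    (hf.continuousOn_iteratedDerivWithin (by exact_mod_cast Nat.le_succ_of_le hj) ud).mono hsub
  have hcont' : ContinuousOn (iteratedDerivWithin (j+1) f (Set.Icc 0 h)) (Set.Icc 0 h) :=
    hf.continuousOn_iteratedDerivWithin (by exact_mod_cast Nat.succ_le_succ hj) ud
  have hdiff : DifferentiableOn ℝ (iteratedDerivWithin j f (Set.Icc 0 h)) (Set.Icc 0 h) :=
    hf.differentiableOn_iteratedDerivWithin (by exact_mod_cast Nat.lt_succ_of_le hj) ud
  have hderiv : ∀ t ∈ Set.Ioo (0:ℝ) y, HasDerivWithinAt (iteratedDerivWithin j f (Set.Icc 0 h))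
      (iteratedDerivWithin (j+1) f (Set.Icc 0 h) t) (Set.Ioi t) t := by
    intro t ht
    have htm : t ∈ Set.Icc (0:ℝ) h := hsub (Set.Ioo_subset_Icc_self ht)
    have h1 : HasDerivWithinAt (iteratedDerivWithin j f (Set.Icc 0 h))
        (iteratedDerivWithin (j+1) f (Set.Icc 0 h) t) (Set.Icc 0 h) t := by
      rw [iteratedDerivWithin_succ]
      exact (hdiff t htm).hasDerivWithinAt
    refine h1.mono_of_mem_nhdsWithin ?_
    have h2 : Set.Ioc t h ∈ nhdsWithin t (Set.Ioi t) := by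
      rw [← Set.Ioi_inter_Iic]
      exact Filter.inter_mem self_mem_nhdsWithin
        (mem_nhdsWithin_of_mem_nhds (Iic_mem_nhds (lt_of_lt_of_le ht.2 hy.2)))
    exact Filter.mem_of_superset h2 (fun z hz => ⟨le_trans htm.1 hz.1.le, hz.2⟩)
  have hint : IntervalIntegrable (iteratedDerivWithin (j+1) f (Set.Icc 0 h)) volume 0 y := by
    apply ContinuousOn.intervalIntegrable
    rw [Set.uIcc_of_le hy.1]
    exact hcont'.mono hsub
  have := integral_eq_sub_of_hasDeriv_right_of_le hy.1 hcont hderiv hint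
  linarith [this]

open intervalIntegral MeasureTheory in
lemma param_deriv' {h₁ h₂ y : ℝ} (hh₁ : 0 < h₁) (hy : y ∈ Set.Icc (0:ℝ) h₂)
    {f g : ℝ → ℝ → ℝ}
    (hfc : ∀ x ∈ Set.Icc (0:ℝ) h₁, ContinuousOn (fun t => f x t) (Set.Icc 0 h₂))
    (hder : ∀ t ∈ Set.Icc (0:ℝ) h₂, ∀ s ∈ Set.Icc (0:ℝ) h₁,
      HasDerivWithinAt (fun x => f x t) (g s t) (Set.Icc 0 h₁) s)
    (hg : ContinuousOn (fun p : ℝ × ℝ => g p.1 p.2) (Set.Icc 0 h₁ ×ˢ Set.Icc 0 h₂)) :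
    HasDerivWithinAt (fun x => ∫ t in (0:ℝ)..y, f x t) (∫ t in (0:ℝ)..y, g 0 t)
      (Set.Icc 0 h₁) 0 := by
  have h0mem : (0:ℝ) ∈ Set.Icc 0 h₁ := ⟨le_rfl, hh₁.le⟩
  have hIy : Set.Icc (0:ℝ) y ⊆ Set.Icc 0 h₂ := Set.Icc_subset_Icc le_rfl hy.2
  have hgslice : ∀ t ∈ Set.Icc (0:ℝ) h₂, ContinuousOn (fun s => g s t) (Set.Icc 0 h₁) := by
    intro t ht
    exact hg.comp (continuous_id.prodMk continuous_const).continuousOn fun s hs => ⟨hs, ht⟩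
  have key : ∀ x ∈ Set.Icc (0:ℝ) h₁, ∀ t ∈ Set.Icc (0:ℝ) h₂,
      f x t - f 0 t = ∫ s in (0:ℝ)..x, g s t := by
    intro x hx t ht
    have hIx : Set.Icc (0:ℝ) x ⊆ Set.Icc 0 h₁ := Set.Icc_subset_Icc le_rfl hx.2
    have hc : ContinuousOn (fun s => f s t) (Set.Icc 0 x) := fun s hs =>
      ((hder t ht s (hIx hs)).continuousWithinAt).mono hIx
    have hd : ∀ s ∈ Set.Ioo (0:ℝ) x, HasDerivWithinAt (fun x' => f x' t) (g s t) (Set.Ioi s) s := by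
      intro s hs
      have hsm : s ∈ Set.Icc (0:ℝ) h₁ := hIx (Set.Ioo_subset_Icc_self hs)
      refine (hder t ht s hsm).mono_of_mem_nhdsWithin ?_
      have h2 : Set.Ioc s h₁ ∈ nhdsWithin s (Set.Ioi s) := by
        rw [← Set.Ioi_inter_Iic]
        exact Filter.inter_mem self_mem_nhdsWithin
          (mem_nhdsWithin_of_mem_nhds (Iic_mem_nhds (lt_of_lt_of_le hs.2 hx.2)))
      exact Filter.mem_of_superset h2 fun z hz => ⟨le_trans hsm.1 hz.1.le, hz.2⟩
    have hint : IntervalIntegrable (fun s => g s t) volume 0 x := by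
      apply ContinuousOn.intervalIntegrable
      rw [Set.uIcc_of_le hx.1]
      exact (hgslice t ht).mono hIx
    have := integral_eq_sub_of_hasDeriv_right_of_le hx.1 hc hd hint
    linarith
  have hu := (isCompact_Icc.prod isCompact_Icc).uniformContinuousOn_of_continuous hg
  rw [hasDerivWithinAt_iff_isLittleO, Asymptotics.isLittleO_iff]
  intro c hc
  set ε := c / (|y| + 1) with hεdef
  have hεpos : 0 < ε := div_pos hc (by positivity)
  obtain ⟨δ, hδpos, hδ⟩ := Metric.uniformContinuousOn_iff.1 hu ε hεpos
  filter_upwards [self_mem_nhdsWithin,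
    eventually_nhdsWithin_of_eventually_nhds (Metric.ball_mem_nhds (0:ℝ) hδpos)] with x hx hxδ
  have hxabs : |x| < δ := by simpa [Real.dist_eq] using hxδ
  have hx0 : 0 ≤ x := hx.1
  have hgslice2 : ContinuousOn (fun t => g 0 t) (Set.Icc 0 h₂) :=
    hg.comp (continuous_const.prodMk continuous_id).continuousOn fun t ht => ⟨h0mem, ht⟩
  have ig0 : IntervalIntegrable (fun t => g 0 t) volume 0 y := by
    apply ContinuousOn.intervalIntegrable
    rw [Set.uIcc_of_le hy.1]
    exact hgslice2.mono hIy
  have ifx : ∀ x' ∈ Set.Icc (0:ℝ) h₁, IntervalIntegrable (fun t => f x' t) volume 0 y := by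
    intro x' hx'
    apply ContinuousOn.intervalIntegrable
    rw [Set.uIcc_of_le hy.1]
    exact (hfc x' hx').mono hIy
  have igc : IntervalIntegrable (fun t => x * g 0 t) volume 0 y := ig0.const_mul x
  simp only [sub_zero, smul_eq_mul]
  have e1 : (∫ t in (0:ℝ)..y, f x t) - (∫ t in (0:ℝ)..y, f 0 t) - x * ∫ t in (0:ℝ)..y, g 0 t
      = ∫ t in (0:ℝ)..y, (f x t - f 0 t - x * g 0 t) := by
    rw [← intervalIntegral.integral_const_mul, ← integral_sub (ifx x hx) (ifx 0 h0mem),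
      ← integral_sub ((ifx x hx).sub (ifx 0 h0mem)) igc]
  rw [e1]
  have bound : ∀ t ∈ Set.uIoc (0:ℝ) y, ‖f x t - f 0 t - x * g 0 t‖ ≤ ε * x := by
    intro t ht
    have ht2 : t ∈ Set.Icc (0:ℝ) h₂ := by
      rw [Set.uIoc_of_le hy.1] at ht
      exact ⟨ht.1.le, ht.2.trans hy.2⟩
    rw [key x hx t ht2]
    have e2 : x * g 0 t = ∫ s in (0:ℝ)..x, g 0 t := by
      rw [intervalIntegral.integral_const, smul_eq_mul, sub_zero]
    have igst : IntervalIntegrable (fun s => g s t) volume 0 x := by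
      apply ContinuousOn.intervalIntegrable
      rw [Set.uIcc_of_le hx0]
      exact (hgslice t ht2).mono (Set.Icc_subset_Icc le_rfl hx.2)
    rw [e2, ← integral_sub igst (intervalIntegrable_const)]
    have inner : ∀ s ∈ Set.uIoc (0:ℝ) x, ‖g s t - g 0 t‖ ≤ ε := by
      intro s hs
      rw [Set.uIoc_of_le hx0] at hs
      have hsm : s ∈ Set.Icc (0:ℝ) h₁ := ⟨hs.1.le, hs.2.trans hx.2⟩
      have hdist : dist ((s, t) : ℝ × ℝ) ((0, t) : ℝ × ℝ) < δ := by
        rw [Prod.dist_eq]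
        simp only [dist_self, Real.dist_eq, sub_zero]
        calc max |s| 0 = |s| := max_eq_left (abs_nonneg s)
          _ ≤ |x| := by rw [abs_of_nonneg hs.1.le, abs_of_nonneg hx0]; exact hs.2
          _ < δ := hxabs
      have := hδ (s, t) ⟨hsm, ht2⟩ (0, t) ⟨h0mem, ht2⟩ hdist
      rw [Real.dist_eq] at this
      exact le_of_lt this
    calc ‖∫ s in (0:ℝ)..x, (g s t - g 0 t)‖ ≤ ε * |x - 0| :=
          intervalIntegral.norm_integral_le_of_norm_le_const inner
      _ = ε * x := by rw [sub_zero, abs_of_nonneg hx0]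
  calc ‖∫ t in (0:ℝ)..y, (f x t - f 0 t - x * g 0 t)‖ ≤ ε * x * |y - 0| :=
        intervalIntegral.norm_integral_le_of_norm_le_const bound
    _ ≤ c * ‖x‖ := by
        rw [sub_zero, Real.norm_eq_abs, abs_of_nonneg hx0]
        have h1 : ε * (|y| + 1) = c := by
          rw [hεdef]; field_simp
        nlinarith [abs_nonneg y, hεpos.le, hx0]

end helpers

/-- `Dy h₂ u j x y = D_y^j u (x,y)`, derivative within `[0,h₂]`. -/
noncomputable def Dy (h₂ : ℝ) (u : ℝ → ℝ → ℝ) (j : ℕ) (x y : ℝ) : ℝ :=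
  iteratedDerivWithin j (u x) (Set.Icc 0 h₂) y

/-- `DxDy h₁ h₂ u i j x y = D_x^i D_y^j u (x,y)`, derivatives within the sides. -/
noncomputable def DxDy (h₁ h₂ : ℝ) (u : ℝ → ℝ → ℝ) (i j : ℕ) (x y : ℝ) : ℝ :=
  iteratedDerivWithin i (fun x' => Dy h₂ u j x' y) (Set.Icc 0 h₁) x

/-- the homogeneous non-classical conditions at the left/bottom
sides imply the homogeneous classical conditions there. -/
theorem stmt_6 (h₁ h₂ : ℝ) (hh₁ : 0 < h₁) (hh₂ : 0 < h₂) (u : ℝ → ℝ → ℝ)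
    (huy : ∀ x ∈ Set.Icc (0 : ℝ) h₁, ContDiffOn ℝ 3 (u x) (Set.Icc 0 h₂))
    (hux : ∀ j ≤ 3, ∀ y ∈ Set.Icc (0 : ℝ) h₂,
      ContDiffOn ℝ 3 (fun x => Dy h₂ u j x y) (Set.Icc 0 h₁))
    (hcont : ∀ i ≤ 3, ∀ j ≤ 3, ContinuousOn
      (fun p : ℝ × ℝ => DxDy h₁ h₂ u i j p.1 p.2) (Set.Icc 0 h₁ ×ˢ Set.Icc 0 h₂))
    (h1 : ∀ j ≤ 2, Dy h₂ u j 0 0 = 0)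
    (h2 : ∀ y ∈ Set.Icc (0 : ℝ) h₂, Dy h₂ u 3 0 y = 0)
    (h3 : ∀ j ≤ 2, DxDy h₁ h₂ u 1 j 0 0 = 0)
    (h4 : ∀ y ∈ Set.Icc (0 : ℝ) h₂, DxDy h₁ h₂ u 1 3 0 y = 0)
    (h5 : ∀ j ≤ 1, DxDy h₁ h₂ u 2 j 0 0 = 0)
    (h6 : ∀ j ≤ 1, ∀ x ∈ Set.Icc (0 : ℝ) h₁, DxDy h₁ h₂ u 3 j x 0 = 0) :
    (∀ y ∈ Set.Icc (0 : ℝ) h₂, u 0 y = 0) ∧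
    (∀ y ∈ Set.Icc (0 : ℝ) h₂, DxDy h₁ h₂ u 1 0 0 y = 0) ∧
    (∀ x ∈ Set.Icc (0 : ℝ) h₁, u x 0 = 0) ∧
    (∀ x ∈ Set.Icc (0 : ℝ) h₁, Dy h₂ u 1 x 0 = 0) := by
  have ud₁ : UniqueDiffOn ℝ (Set.Icc (0:ℝ) h₁) := uniqueDiffOn_Icc hh₁
  have h0m₁ : (0:ℝ) ∈ Set.Icc 0 h₁ := ⟨le_rfl, hh₁.le⟩
  have h0m₂ : (0:ℝ) ∈ Set.Icc 0 h₂ := ⟨le_rfl, hh₂.le⟩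
  -- Part (a)
  have parta : ∀ y ∈ Set.Icc (0 : ℝ) h₂, u 0 y = 0 := by
    apply zero_of_jet' hh₂ (huy 0 h0m₁)
    · intro j hj; exact h1 j hj
    · exact h2
  -- Part (b)
  have hub : ∀ j : ℕ, j ≤ 2 → (∀ t ∈ Set.Icc (0:ℝ) h₂, DxDy h₁ h₂ u 1 (j+1) 0 t = 0) →
      ∀ y ∈ Set.Icc (0:ℝ) h₂, DxDy h₁ h₂ u 1 j 0 y = 0 := by
    intro j hj hnext y hy
    have hj3 : j ≤ 3 := hj.trans (by norm_num)
    have hj13 : j + 1 ≤ 3 := Nat.succ_le_succ hj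
    have hT1 : HasDerivWithinAt (fun x => Dy h₂ u j x 0) (DxDy h₁ h₂ u 1 j 0 0)
        (Set.Icc 0 h₁) 0 := by
      have hd := ((hux j hj3 0 h0m₂).differentiableOn (by norm_num) 0 h0m₁).hasDerivWithinAt
      have : DxDy h₁ h₂ u 1 j 0 0 = derivWithin (fun x => Dy h₂ u j x 0) (Set.Icc 0 h₁) 0 := by
        rw [DxDy, iteratedDerivWithin_one]
      rwa [this]
    have hT2 : HasDerivWithinAt (fun x => ∫ t in (0:ℝ)..y, Dy h₂ u (j+1) x t)
        (∫ t in (0:ℝ)..y, DxDy h₁ h₂ u 1 (j+1) 0 t) (Set.Icc 0 h₁) 0 := by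
      apply param_deriv' hh₁ hy
      · intro x hx
        exact (huy x hx).continuousOn_iteratedDerivWithin (by exact_mod_cast hj13)
          (uniqueDiffOn_Icc hh₂)
      · intro t ht s hs
        have hd := ((hux (j+1) hj13 t ht).differentiableOn (by norm_num) s hs).hasDerivWithinAt
        have : DxDy h₁ h₂ u 1 (j+1) s t
            = derivWithin (fun x => Dy h₂ u (j+1) x t) (Set.Icc 0 h₁) s := by
          rw [DxDy, iteratedDerivWithin_one]
        rwa [this]
      · exact hcont 1 (by norm_num) (j+1) hj13
    have heq : ∀ x ∈ Set.Icc (0:ℝ) h₁, Dy h₂ u j x y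
        = Dy h₂ u j x 0 + ∫ t in (0:ℝ)..y, Dy h₂ u (j+1) x t := by
      intro x hx
      exact FTC_iter' hh₂ (huy x hx) hj hy
    have hfin : HasDerivWithinAt (fun x => Dy h₂ u j x y)
        (DxDy h₁ h₂ u 1 j 0 0 + ∫ t in (0:ℝ)..y, DxDy h₁ h₂ u 1 (j+1) 0 t)
        (Set.Icc 0 h₁) 0 := (hT1.add hT2).congr heq (heq 0 h0m₁)
    have hz : (∫ t in (0:ℝ)..y, DxDy h₁ h₂ u 1 (j+1) 0 t) = 0 := by
      have : (∫ t in (0:ℝ)..y, DxDy h₁ h₂ u 1 (j+1) 0 t) = ∫ _t in (0:ℝ)..y, (0:ℝ) := by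
        apply intervalIntegral.integral_congr
        intro t ht
        rw [Set.uIcc_of_le hy.1] at ht
        exact hnext t ⟨ht.1, ht.2.trans hy.2⟩
      rw [this, intervalIntegral.integral_zero]
    have : DxDy h₁ h₂ u 1 j 0 y = DxDy h₁ h₂ u 1 j 0 0
        + ∫ t in (0:ℝ)..y, DxDy h₁ h₂ u 1 (j+1) 0 t := by
      rw [DxDy, iteratedDerivWithin_one]
      exact hfin.derivWithin (ud₁ 0 h0m₁)
    rw [this, h3 j hj, hz, add_zero]
  have hb2 := hub 2 le_rfl h4
  have hb1 := hub 1 (by norm_num) hb2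
  have hb0 := hub 0 (by norm_num) hb1
  -- Parts (c),(d)
  have hDy0 : (fun x => Dy h₂ u 0 x 0) = fun x => u x 0 := by
    funext x
    simp [Dy]
  have partc : ∀ x ∈ Set.Icc (0 : ℝ) h₁, u x 0 = 0 := by
    apply zero_of_jet' hh₁ (f := fun x => u x 0)
    · rw [← hDy0]; exact hux 0 (by norm_num) 0 h0m₂
    · intro j hj
      interval_cases j
      · rw [iteratedDerivWithin_zero]
        have := h1 0 (by norm_num)
        simpa [Dy] using this
      · rw [← hDy0]; exact h3 0 (by norm_num)
      · rw [← hDy0]; exact h5 0 (by norm_num)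
    · intro x hx
      rw [← hDy0]; exact h6 0 (by norm_num) x hx
  have partd : ∀ x ∈ Set.Icc (0 : ℝ) h₁, Dy h₂ u 1 x 0 = 0 := by
    apply zero_of_jet' hh₁ (f := fun x => Dy h₂ u 1 x 0)
    · exact hux 1 (by norm_num) 0 h0m₂
    · intro j hj
      interval_cases j
      · rw [iteratedDerivWithin_zero]
        exact h1 1 (by norm_num)
      · exact h3 1 (by norm_num)
      · exact h5 1 (by norm_num)
    · intro x hx
      exact h6 1 (by norm_num) x hx
  exact ⟨parta, hb0, partc, partd⟩
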